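/- arXiv:2302.02753 — 3 statements merged into one kernel-verified Lean document; each statement's English description precedes it below -/
import Mathlib

section
/- The Laplace transforms 𝓛̃_a(s) = E_a[e^{−s|C_o^{h*}|}] and 𝓛_a(s) = E_a[e^{−s|C_o^{h*} ∩ 𝕋⁺|}] satisfy the relation 𝓛̃_a(s) = e^{s/d} · 𝓛_a(s)^{(d+1)/d} for all s > 0 and a ≥ h*. -/
/-!
For `a ≥ h*` the root lies in `C_o^{h*}`, and the rest of the cluster splits along the `d + 1`
branches at the root: the field on the branch through the `i`-th neighbour of `o` depends only on
`a` and on the innovations of that branch. Distinct branches carry disjoint families of i.i.d.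
Gaussian innovations, so their clusters are i.i.d. With `m = E[e^{-s|branch cluster|}]` this gives
`𝓛̃_a(s) = e^{-s} m^{d+1}` and, since `𝕋⁺` omits one branch, `𝓛_a(s) = e^{-s} m^d`;
eliminating `m` gives the relation.
-/

open MeasureTheory ProbabilityTheory Real Set Filter Topology NNReal
open scoped Classical ENNReal

noncomputable section

namespace GFF

/-- Vertex set of the `(d+1)`-regular tree `𝕋`: `none` is the root `o`, and
`some (i, l)` is the vertex reached from the root by first crossing the `i`-th
edge at the root (`i : Fin (d+1)`) and then following the child steps in `l`
(each non-root vertex has `d` children). The fixed neighbour `ō` of the root is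
`some (Fin.last d, [])`. -/
abbrev V (d : ℕ) := Option (Fin (d + 1) × List (Fin d))

variable (d : ℕ)

/-- Graph distance from the root `o`. -/
def depth : V d → ℕ := fun v => v.elim 0 fun p => p.2.length + 1

/-- The geodesic path from the root `o` to `v`, including both endpoints. -/
def pathFromRoot : V d → List (V d)
  | none => [none]
  | some (i, l) => none :: (List.range (l.length + 1)).map fun k => some (i, l.take k)

/-- The forward tree `𝕋⁺`: vertices whose geodesic from `o` does not pass through
the fixed neighbour `ō = some (Fin.last d, [])`. -/
def forward : Set (V d) := {v | v.elim True fun p => p.1 ≠ Fin.last d}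

/-- The variance `σ_ν² = d/(d-1)` of the root field value. -/
def varRoot : ℝ≥0 := (d : ℝ≥0) / ((d : ℝ≥0) - 1)

/-- The variance `σ_Y² = (d+1)/d` of the innovations. -/
def varY : ℝ≥0 := ((d : ℝ≥0) + 1) / (d : ℝ≥0)

/-- The Gaussian free field on `𝕋` with root value `a`, built from the innovations
`ω`; this is the closed form of the recursion `φ_o = a`, `φ_x = φ_{x̄}/d + ω_x`,
where `x̄` is the parent of `x`. -/
def field (a : ℝ) (ω : V d → ℝ) : V d → ℝ
  | none => a
  | some (i, l) =>
      a / (d : ℝ) ^ (l.length + 1) +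
        ∑ k ∈ Finset.range (l.length + 1), ω (some (i, l.take k)) / (d : ℝ) ^ (l.length - k)

variable {Ω : Type} [MeasurableSpace Ω]

/-- `(P, Y)` is an environment for the Gaussian free field on `𝕋`: the `Y_x`,
`x ∈ 𝕋`, are independent centred Gaussians with `Var(Y_o) = d/(d-1)` and
`Var(Y_x) = (d+1)/d` for `x ≠ o`.  Under `P`, the field `field d (Y none ω) (Y · ω)`
then has the law of the GFF on `𝕋` (covariance = Green function), and
`field d a (Y · ω)` has its law conditioned on `φ_o = a`, i.e. `P_a`. -/
structure IsGFFEnv (P : Measure Ω) (Y : V d → Ω → ℝ) : Prop where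
  prob : IsProbabilityMeasure P
  meas : ∀ v, Measurable (Y v)
  indep : iIndepFun Y P
  law : ∀ v, P.map (Y v) = gaussianReal 0 (if v = none then varRoot d else varY d)

/-- The connected component `C_o^h` of the root in the level set `{φ ≥ h}`:
on a tree, `v` is connected to `o` in `{φ ≥ h}` iff `φ ≥ h` along the whole
geodesic from `o` to `v`. -/
def cluster (h : ℝ) (φ : V d → ℝ) : Set (V d) :=
  {v | ∀ z ∈ pathFromRoot d v, h ≤ φ z}

/-- The unconditioned field (root value `Y_o`). -/
def fieldUncond (Y : V d → Ω → ℝ) (ω : Ω) : V d → ℝ :=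
  field d (Y none ω) fun v => Y v ω

/-- `η(h,a) = P_a[|C_o^h| = ∞]`. -/
def η (P : Measure Ω) (Y : V d → Ω → ℝ) (h a : ℝ) : ℝ :=
  (P {ω | (cluster d h (field d a fun v => Y v ω)).Infinite}).toReal

/-- `η⁺(h,a) = P_a[|C_o^h ∩ 𝕋⁺| = ∞]`. -/
def ηplus (P : Measure Ω) (Y : V d → Ω → ℝ) (h a : ℝ) : ℝ :=
  (P {ω | (cluster d h (field d a fun v => Y v ω) ∩ forward d).Infinite}).toReal

/-- The centred Gaussian measure `ν` with variance `d/(d-1)`. -/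
def ν : Measure ℝ := gaussianReal 0 (varRoot d)

/-- The centred Gaussian density `ρ_Y` with variance `(d+1)/d`. -/
def ρY : ℝ → ℝ := gaussianPDFReal 0 (varY d)

/-- The operator `L_h` on `L²(ν)`:
`L_h[f](a) = 1_{[h,∞)}(a) · d · ∫_{[h,∞)} f(x) ρ_Y(x − a/d) dx`. -/
def Lop (h : ℝ) (f : ℝ → ℝ) : ℝ → ℝ :=
  (Ici h).indicator fun a => (d : ℝ) * ∫ x in Ici h, f x * ρY d (x - a / d)

/-- `(hstar, χ)` is the critical pair: `χ = χ_{h*}` is the unique non-negative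
unit-`L²(ν)`-norm eigenfunction of `L_{h*}`, continuous and strictly positive on
`[h*,∞)`, vanishing on `(−∞,h*)`, with eigenvalue `λ_{h*} = 1`; this
characterises the critical height `h*` (the unique `h` with `λ_h = 1`). -/
structure IsCriticalPair (hstar : ℝ) (χ : ℝ → ℝ) : Prop where
  cont : ContinuousOn χ (Ici hstar)
  nonneg : ∀ a, 0 ≤ χ a
  pos : ∀ a, hstar ≤ a → 0 < χ a
  zero : ∀ a, a < hstar → χ a = 0
  norm : (∫ a, χ a ^ 2 ∂(ν d)) = 1
  eigen : ∀ a, Lop d hstar χ a = χ a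

/-- The constant `C₁ = Γ(1/2)⁻¹ √( (2d/(d−1)) ⟨1,χ⟩_ν / ⟨χ,χ²⟩_ν )`. -/
def Cone (χ : ℝ → ℝ) : ℝ :=
  (1 / Real.Gamma (1 / 2)) *
    Real.sqrt ((2 * d / (d - 1)) * (∫ a, χ a ∂(ν d)) / (∫ a, χ a ^ 3 ∂(ν d)))

/-- The constant `C₂ = 2 ((d−1)/(d+1)) ⟨Id,χ²⟩_ν / ⟨χ,χ²⟩_ν`. -/
def Ctwo (χ : ℝ → ℝ) : ℝ :=
  2 * ((d - 1) / (d + 1)) * (∫ a, a * χ a ^ 2 ∂(ν d)) / (∫ a, χ a ^ 3 ∂(ν d))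

/-- The critical cluster in the forward tree, `C_o^{h*} ∩ 𝕋⁺`. -/
def fwdCluster (hstar a : ℝ) (Y : V d → Ω → ℝ) (ω : Ω) : Set (V d) :=
  cluster d hstar (field d a fun v => Y v ω) ∩ forward d

/-- The Laplace transform `𝓛_a(s) = E_a[e^{−s|C_o^{h*} ∩ 𝕋⁺|}]` (with
`e^{-s·∞} = 0` for `s > 0` encoded by the `Finite` case split). -/
def laplaceFwd (P : Measure Ω) (Y : V d → Ω → ℝ) (hstar a s : ℝ) : ℝ :=
  ∫ ω, (if (fwdCluster d hstar a Y ω).Finite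
    then Real.exp (-s * (fwdCluster d hstar a Y ω).ncard) else 0) ∂P

/-- The Laplace transform `𝓛̃_a(s) = E_a[e^{−s|C_o^{h*}|}]`. -/
def laplaceFull (P : Measure Ω) (Y : V d → Ω → ℝ) (hstar a s : ℝ) : ℝ :=
  ∫ ω, (if (cluster d hstar (field d a fun v => Y v ω)).Finite
    then Real.exp (-s * (cluster d hstar (field d a fun v => Y v ω)).ncard) else 0) ∂P

/-- `γ_s(a) = 1 − 𝓛_a(s)` for `a ≥ h*`, and `0` for `a < h*`. -/
def γfun (P : Measure Ω) (Y : V d → Ω → ℝ) (hstar s a : ℝ) : ℝ :=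
  if hstar ≤ a then 1 - laplaceFwd d P Y hstar a s else 0

/-- `a₁(s) = ⟨γ_s, χ⟩_ν`. -/
def aone (P : Measure Ω) (Y : V d → Ω → ℝ) (hstar : ℝ) (χ : ℝ → ℝ) (s : ℝ) : ℝ :=
  ∫ a, γfun d P Y hstar s a * χ a ∂(ν d)

/-- The `n`-th generation `Z_n = {x ∈ C_o^{h*} ∩ 𝕋⁺ : d(o,x) = n}`. -/
def gen (hstar a : ℝ) (Y : V d → Ω → ℝ) (ω : Ω) (n : ℕ) : Set (V d) :=
  {x | x ∈ fwdCluster d hstar a Y ω ∧ depth d x = n}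

/-- The shifted Gaussian measure `ν*`, with density `ρ_{ν*}(x) = ρ_ν(x + h*)`. -/
def νstar (hstar : ℝ) : Measure ℝ := gaussianReal (-hstar) (varRoot d)

/-- The operator `H_h[f](a) = ∫_0^∞ f(x) ρ_Y(x − a/d + ((d−1)/d)h) dx` for `a ≥ 0`,
and `0` for `a < 0` (so that `H_h = d⁻¹ θ_h L_h θ_h⁻¹`). -/
def Hop (h : ℝ) (f : ℝ → ℝ) : ℝ → ℝ :=
  (Ici (0:ℝ)).indicator fun a =>
    ∫ x in Ici (0:ℝ), f x * ρY d (x - a / d + ((d - 1) / d) * h)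


end GFF

section ExpNegCard

variable {α : Type*} (s : ℝ)

def expNegCard (S : Set α) : ℝ :=
  if S.Finite then Real.exp (-s * S.ncard) else 0

theorem expNegCard_nonneg (S : Set α) : 0 ≤ expNegCard s S := by
  unfold expNegCard; split <;> positivity

theorem expNegCard_union {S T : Set α} (hST : Disjoint S T) :
    expNegCard s (S ∪ T) = expNegCard s S * expNegCard s T := by
  by_cases hS : S.Finite
  · by_cases hT : T.Finite
    · simp only [expNegCard, if_pos (hS.union hT), if_pos hS, if_pos hT,
        Set.ncard_union_eq hST hS hT, ← Real.exp_add]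
      push_cast
      rw [mul_add]
    · have hST' : ¬ (S ∪ T).Finite := fun h => hT (h.subset Set.subset_union_right)
      simp only [expNegCard, if_neg hST', if_neg hT, mul_zero]
  · have hST' : ¬ (S ∪ T).Finite := fun h => hS (h.subset Set.subset_union_left)
    simp only [expNegCard, if_neg hST', if_neg hS, zero_mul]

theorem expNegCard_insert {a : α} {S : Set α} (ha : a ∉ S) :
    expNegCard s (insert a S) = Real.exp (-s) * expNegCard s S := by
  rw [Set.insert_eq, expNegCard_union s (Set.disjoint_singleton_left.2 ha)]
  simp [expNegCard]

theorem expNegCard_image {β : Type*} {f : α → β} (hf : Function.Injective f) (S : Set α) :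
    expNegCard s (f '' S) = expNegCard s S := by
  simp only [expNegCard, Set.finite_image_iff hf.injOn, Set.ncard_image_of_injective S hf]

theorem expNegCard_biUnion {ι : Type*} (F : Finset ι) {S : ι → Set α}
    (hS : (F : Set ι).PairwiseDisjoint S) :
    expNegCard s (⋃ i ∈ F, S i) = ∏ i ∈ F, expNegCard s (S i) := by
  classical
  induction F using Finset.induction_on with
  | empty => simp [expNegCard]
  | insert j F hj ih =>
    have hdisj : Disjoint (S j) (⋃ i ∈ F, S i) :=
      Set.disjoint_iUnion₂_right.2 fun i hi =>
        hS (Finset.mem_insert_self j F) (Finset.mem_insert_of_mem hi)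
          (ne_of_mem_of_not_mem hi hj).symm
    rw [Finset.set_biUnion_insert, Finset.prod_insert hj, expNegCard_union s hdisj,
      ih (hS.subset (by simp))]

theorem expNegCard_insert_none_biUnion_image {ι β : Type*} (F : Finset ι) (K : ι → Set β) :
    expNegCard s (insert none (⋃ i ∈ F, (fun b => some (i, b)) '' K i)) =
      Real.exp (-s) * ∏ i ∈ F, expNegCard s (K i) := by
  have hinj : ∀ i : ι, Function.Injective fun b : β => some (i, b) :=
    fun i b b' hb => by simpa using hb
  have hdisj : (F : Set ι).PairwiseDisjoint fun i => (fun b => some (i, b)) '' K i := by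
    intro i _ j _ hij
    refine Set.disjoint_left.2 ?_
    rintro _ ⟨b, _, rfl⟩ ⟨b', _, hb⟩
    exact hij (Prod.ext_iff.1 (Option.some.inj hb)).1.symm
  rw [expNegCard_insert s (by simp), expNegCard_biUnion s F hdisj]
  simp_rw [expNegCard_image s (hinj _)]

theorem measurable_expNegCard [Countable α] {X : Type*} [MeasurableSpace X] {S : X → Set α}
    (hS : ∀ a, MeasurableSet {x | a ∈ S x}) : Measurable fun x => expNegCard s (S x) := by
  let g : ℝ≥0∞ → ℝ := fun t => if t = ∞ then 0 else Real.exp (-s * t.toReal)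
  have hg : Measurable g :=
    Measurable.ite (measurableSet_singleton ∞) measurable_const (by fun_prop)
  have hcard : ∀ x, expNegCard s (S x) = g (∑' a, (S x).indicator 1 a) := by
    intro x
    rw [← tsum_subtype (S x) (1 : α → ℝ≥0∞)]
    simp only [Pi.one_apply]
    rw [ENNReal.tsum_set_one]
    by_cases hfin : (S x).Finite
    · rw [← hfin.cast_ncard_eq]
      simp [g, expNegCard, hfin]
    · simp [g, expNegCard, hfin, Set.encard_eq_top hfin]
  simp_rw [hcard]
  refine hg.comp (Measurable.tsum fun a => ?_)
  have hind : (fun x => (S x).indicator (1 : α → ℝ≥0∞) a) = {x | a ∈ S x}.indicator 1 := by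
    ext x
    simp [Set.indicator_apply]
  rw [hind]
  exact measurable_const.indicator (hS a)

end ExpNegCard

theorem integral_finset_prod_infinitePi_eq_pow {ι E : Type*} [MeasurableSpace E]
    (ν : Measure E) [IsProbabilityMeasure ν] {g : E → ℝ} (hg : Measurable g) (F : Finset ι) :
    ∫ x, ∏ i ∈ F, g (x i) ∂(Measure.infinitePi fun _ : ι => ν) = (∫ y, g y ∂ν) ^ F.card := by
  have hprod : (fun x : ι → E => ∏ i ∈ F, g (x i)) =
      fun x => (fun y : F → E => ∏ i, g (y i)) (F.restrict x) := by
    ext x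
    exact (Finset.prod_coe_sort F fun i => g (x i)).symm
  have hmeas : AEStronglyMeasurable (fun y : F → E => ∏ i, g (y i)) (Measure.pi fun _ => ν) :=
    (Finset.measurable_prod _ fun i _ => hg.comp (measurable_pi_apply i)).aestronglyMeasurable
  rw [hprod, integral_restrict_infinitePi (fun _ => ν) hmeas, integral_fintype_prod_eq_pow,
    Fintype.card_coe]

theorem exp_neg_mul_pow_succ_eq {d : ℕ} (hd : d ≠ 0) (s : ℝ) {m : ℝ} (hm : 0 ≤ m) :
    Real.exp (-s) * m ^ (d + 1) =
      Real.exp (s / d) * (Real.exp (-s) * m ^ d) ^ (((d : ℝ) + 1) / d) := by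
  have hd' : (d : ℝ) ≠ 0 := Nat.cast_ne_zero.2 hd
  rw [Real.mul_rpow (Real.exp_nonneg _) (pow_nonneg hm _), ← Real.exp_mul,
    ← Real.rpow_natCast m d, ← Real.rpow_mul hm, mul_div_cancel₀ _ hd', ← mul_assoc,
    ← Real.exp_add]
  have hexp : s / d + -s * (((d : ℝ) + 1) / d) = -s := by
    field_simp
    ring
  rw [hexp]
  congr 1
  exact_mod_cast (Real.rpow_natCast m (d + 1)).symm

namespace GFF

variable (d : ℕ)

def branchField (a : ℝ) (y : List (Fin d) → ℝ) (l : List (Fin d)) : ℝ :=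
  a / (d : ℝ) ^ (l.length + 1) +
    ∑ k ∈ Finset.range (l.length + 1), y (l.take k) / (d : ℝ) ^ (l.length - k)

theorem field_some (a : ℝ) (x : V d → ℝ) (i : Fin (d + 1)) (l : List (Fin d)) :
    field d a x (some (i, l)) = branchField d a (fun m => x (some (i, m))) l :=
  rfl

def branchCluster (h a : ℝ) (y : List (Fin d) → ℝ) : Set (List (Fin d)) :=
  {l | ∀ k ≤ l.length, h ≤ branchField d a y (l.take k)}

theorem measurableSet_mem_branchCluster (h a : ℝ) (l : List (Fin d)) :
    MeasurableSet {y | l ∈ branchCluster d h a y} := by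
  have hfield : ∀ m, Measurable fun y => branchField d a y m := fun m =>
    measurable_const.add <| Finset.measurable_sum _ fun j _ =>
      (measurable_pi_apply (X := fun _ : List (Fin d) => ℝ) _).div_const _
  have hset : {y | l ∈ branchCluster d h a y} =
      ⋂ k, ⋂ (_ : k ≤ l.length), {y | h ≤ branchField d a y (l.take k)} := by
    ext y
    simp [branchCluster]
  rw [hset]
  exact MeasurableSet.iInter fun k => MeasurableSet.iInter fun _ =>
    measurableSet_le measurable_const (hfield _)

theorem cluster_field_eq {h a : ℝ} (ha : h ≤ a) (x : V d → ℝ) :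
    cluster d h (field d a x) =
      insert none (⋃ i ∈ Finset.univ,
        (fun l => some (i, l)) '' branchCluster d h a (fun l => x (some (i, l)))) := by
  ext v
  rcases v with _ | ⟨i, l⟩
  · simp [cluster, pathFromRoot, field, ha]
  · simp [cluster, pathFromRoot, field.eq_1, field_some, branchCluster, ha]

theorem cluster_field_inter_forward {h a : ℝ} (ha : h ≤ a) (x : V d → ℝ) :
    cluster d h (field d a x) ∩ forward d =
      insert none (⋃ i ∈ Finset.univ.erase (Fin.last d),
        (fun l => some (i, l)) '' branchCluster d h a (fun l => x (some (i, l)))) := by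
  rw [cluster_field_eq d ha]
  ext v
  rcases v with _ | ⟨i, l⟩ <;> simp [forward]

def branchLaw : Measure (List (Fin d) → ℝ) :=
  Measure.infinitePi fun _ => gaussianReal 0 (varY d)

instance : IsProbabilityMeasure (branchLaw d) := by
  unfold branchLaw
  infer_instance

def branchLaplace (h a s : ℝ) : ℝ :=
  ∫ y, expNegCard s (branchCluster d h a y) ∂branchLaw d

theorem branchLaplace_nonneg (h a s : ℝ) : 0 ≤ branchLaplace d h a s :=
  integral_nonneg fun _ => expNegCard_nonneg s _

variable {d} {Ω : Type} [MeasurableSpace Ω] {P : Measure Ω} {Y : V d → Ω → ℝ}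

theorem IsGFFEnv.map_branches (hEnv : IsGFFEnv d P Y) :
    P.map (fun ω i l => Y (some (i, l)) ω) =
      Measure.infinitePi fun _ : Fin (d + 1) => branchLaw d := by
  have hjoint : P.map (fun ω v => Y v ω) = Measure.infinitePi fun v =>
      gaussianReal 0 (if v = none then varRoot d else varY d) := by
    rw [hEnv.indep.map_fun_eq_infinitePi_map hEnv.meas]
    simp_rw [hEnv.law]
  have hsplit : (fun ω i l => Y (some (i, l)) ω) =
      MeasurableEquiv.curry (Fin (d + 1)) (List (Fin d)) ℝ ∘ (fun x p => x (some p)) ∘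
        (fun ω v => Y v ω) := rfl
  have hY : Measurable fun ω v => Y v ω := measurable_pi_lambda _ hEnv.meas
  rw [hsplit, ← Measure.map_map (by fun_prop) ((by fun_prop : Measurable _).comp hY),
    ← Measure.map_map (by fun_prop) hY, hjoint,
    Measure.map_infinitePi_infinitePi_of_inj (Option.some_injective _)]
  simp only [reduceCtorEq, if_false]
  exact Measure.infinitePi_map_curry fun _ _ => gaussianReal 0 (varY d)

theorem IsGFFEnv.integral_finset_prod_branch (hEnv : IsGFFEnv d P Y)
    {g : (List (Fin d) → ℝ) → ℝ} (hg : Measurable g) (F : Finset (Fin (d + 1))) :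
    ∫ ω, ∏ i ∈ F, g (fun l => Y (some (i, l)) ω) ∂P = (∫ y, g y ∂branchLaw d) ^ F.card := by
  have hB : Measurable fun ω (i : Fin (d + 1)) (l : List (Fin d)) => Y (some (i, l)) ω :=
    measurable_pi_lambda _ fun i => measurable_pi_lambda _ fun l => hEnv.meas _
  have hprod : Measurable fun x : Fin (d + 1) → List (Fin d) → ℝ => ∏ i ∈ F, g (x i) :=
    Finset.measurable_prod _ fun i _ => hg.comp (measurable_pi_apply i)
  rw [← integral_map hB.aemeasurable hprod.aestronglyMeasurable, hEnv.map_branches,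
    integral_finset_prod_infinitePi_eq_pow _ hg]

theorem IsGFFEnv.integral_expNegCard_insert_none_biUnion_branchCluster (hEnv : IsGFFEnv d P Y)
    (h a s : ℝ) (F : Finset (Fin (d + 1))) :
    ∫ ω, expNegCard s (insert none (⋃ i ∈ F, (fun l => some (i, l)) ''
        branchCluster d h a (fun l => Y (some (i, l)) ω))) ∂P =
      Real.exp (-s) * branchLaplace d h a s ^ F.card := by
  simp_rw [expNegCard_insert_none_biUnion_image]
  rw [integral_const_mul, hEnv.integral_finset_prod_branch
    (measurable_expNegCard s (measurableSet_mem_branchCluster d h a)) F]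
  rfl

theorem IsGFFEnv.laplaceFull_eq (hEnv : IsGFFEnv d P Y) {h a : ℝ} (ha : h ≤ a) (s : ℝ) :
    laplaceFull d P Y h a s = Real.exp (-s) * branchLaplace d h a s ^ (d + 1) := by
  change ∫ ω, expNegCard s (cluster d h (field d a fun v => Y v ω)) ∂P = _
  simp_rw [cluster_field_eq d ha]
  rw [hEnv.integral_expNegCard_insert_none_biUnion_branchCluster, Finset.card_univ,
    Fintype.card_fin]

theorem IsGFFEnv.laplaceFwd_eq (hEnv : IsGFFEnv d P Y) {h a : ℝ} (ha : h ≤ a) (s : ℝ) :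
    laplaceFwd d P Y h a s = Real.exp (-s) * branchLaplace d h a s ^ d := by
  change ∫ ω, expNegCard s (cluster d h (field d a fun v => Y v ω) ∩ forward d) ∂P = _
  simp_rw [cluster_field_inter_forward d ha]
  rw [hEnv.integral_expNegCard_insert_none_biUnion_branchCluster,
    Finset.card_erase_of_mem (Finset.mem_univ _), Finset.card_univ, Fintype.card_fin,
    Nat.add_sub_cancel]

theorem laplace_full_forward_relation_general {Ω : Type} [MeasurableSpace Ω] (d : ℕ) (hd : 2 ≤ d)
    (P : Measure Ω) (Y : V d → Ω → ℝ) (hEnv : IsGFFEnv d P Y)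
    (hstar : ℝ)
    (s : ℝ) (a : ℝ) (ha : hstar ≤ a) :
    laplaceFull d P Y hstar a s =
      Real.exp (s / d) * laplaceFwd d P Y hstar a s ^ (((d : ℝ) + 1) / d) := by
  rw [hEnv.laplaceFull_eq ha, hEnv.laplaceFwd_eq ha]
  exact exp_neg_mul_pow_succ_eq (by omega) s (branchLaplace_nonneg d hstar a s)

/-- the Laplace transforms `𝓛̃_a(s) = E_a[e^{−s|C_o^{h*}|}]` and
`𝓛_a(s) = E_a[e^{−s|C_o^{h*} ∩ 𝕋⁺|}]` satisfy
`𝓛̃_a(s) = e^{s/d} 𝓛_a(s)^{(d+1)/d}` for all `s > 0`, `a ≥ h*`. -/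
theorem laplace_full_forward_relation {Ω : Type} [MeasurableSpace Ω] (d : ℕ) (hd : 2 ≤ d)
    (P : Measure Ω) (Y : V d → Ω → ℝ) (hEnv : IsGFFEnv d P Y)
    (hstar : ℝ) (χ : ℝ → ℝ) (hcrit : IsCriticalPair d hstar χ)
    (s : ℝ) (hs : 0 < s) (a : ℝ) (ha : hstar ≤ a) :
    laplaceFull d P Y hstar a s =
      Real.exp (s / d) * laplaceFwd d P Y hstar a s ^ (((d : ℝ) + 1) / d) :=
  laplace_full_forward_relation_general d hd P Y hEnv hstar s a ha

end GFF
end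
end

section
/- For every a ≥ h*, every H ≥ h* and every integer N ≥ 1 it holds P_a[𝒜 ∩ 𝒞_H ∩ 𝒟_N] = 0, where 𝒜 = {|C_o^{h*} ∩ 𝕋⁺| = ∞}, 𝒞_H = {Φ_n ≤ H for all n ≥ 0} and 𝒟_N = {|Z_n| ≤ N for all n ≥ 0}, with Z_n = {x ∈ C_o^{h*} ∩ 𝕋⁺ : d(o,x) = n} and Φ_n = max_{x ∈ Z_n} φ_x (max ∅ = −∞). -/
open MeasureTheory ProbabilityTheory Real Set Filter Topology NNReal
open scoped Classical ENNReal

noncomputable section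

/-!
Let `B_n` be the event that the generations `Z_0, …, Z_n` are nonempty, have at most `N`
vertices and carry field values at most `H`; the event of the theorem lies in every `B_n`.
On `B_{n+1}` some child `x` of a vertex `x̄ ∈ Z_n` has `φ_x ≥ h*`, hence an innovation
`Y_x = φ_x - φ_{x̄}/d ≥ h* - H/d`. There are at most `dN` candidates for `x`, and their
innovations are independent of the field up to depth `n`; splitting `B_n` according to the
value of `Z_n` gives `P(B_{n+1}) ≤ (1 - p^{dN}) P(B_n)` with `p = P(Y < h* - H/d) > 0`,
so `P(B_n) → 0`.
-/

namespace ProbabilityTheory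

variable {Ω ι : Type*} {mΩ : MeasurableSpace Ω} {P : Measure Ω}

lemma measurable_of_mem_iSup_comap {β : Type*} [MeasurableSpace β] (f : ι → Ω → β) {S : Set ι}
    {i : ι} (hi : i ∈ S) :
    Measurable[⨆ j ∈ S, MeasurableSpace.comap (f j) inferInstance] (f i) :=
  measurable_iff_comap_le.2 <|
    le_iSup₂ (f := fun j (_ : j ∈ S) => MeasurableSpace.comap (f j) inferInstance) i hi

lemma measure_le_mul_of_subset_biUnion_indep {m₁ m₂ : MeasurableSpace Ω} (hm₁ : m₁ ≤ mΩ)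
    (hind : Indep m₁ m₂ P) {A B : Set Ω} {s : Finset ι} {E D : ι → Set Ω} {c : ℝ≥0∞}
    (hE : ∀ i ∈ s, MeasurableSet[m₁] (E i)) (hEdisj : (s : Set ι).PairwiseDisjoint E)
    (hEA : ∀ i ∈ s, E i ⊆ A) (hD : ∀ i ∈ s, MeasurableSet[m₂] (D i))
    (hDc : ∀ i ∈ s, P (D i) ≤ c) (hB : B ⊆ ⋃ i ∈ s, E i ∩ D i) : P B ≤ c * P A :=
  calc P B ≤ ∑ i ∈ s, P (E i ∩ D i) := (measure_mono hB).trans (measure_biUnion_finset_le _ _)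
    _ = ∑ i ∈ s, P (E i) * P (D i) :=
        Finset.sum_congr rfl fun i hi => (Indep_iff _ _ _).1 hind _ _ (hE i hi) (hD i hi)
    _ ≤ ∑ i ∈ s, c * P (E i) :=
        Finset.sum_le_sum fun i hi => by rw [mul_comm]; gcongr; exact hDc i hi
    _ = c * P (⋃ i ∈ s, E i) := by
        rw [← Finset.mul_sum, measure_biUnion_finset hEdisj fun i hi => hm₁ _ (hE i hi)]
    _ ≤ c * P A := by gcongr; exact Set.iUnion₂_subset hEA

lemma measure_biUnion_le_eq_one_sub_pow [IsProbabilityMeasure P] {X : ι → Ω → ℝ}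
    (hind : iIndepFun X P) (hX : ∀ i, Measurable (X i)) (s : Finset ι) {t : ℝ} {p : ℝ≥0∞}
    (hp : ∀ i ∈ s, P (X i ⁻¹' Set.Iio t) = p) :
    P (⋃ i ∈ s, {ω | t ≤ X i ω}) = 1 - p ^ s.card := by
  have hcompl : (⋃ i ∈ s, {ω | t ≤ X i ω})ᶜ = ⋂ i ∈ s, X i ⁻¹' Set.Iio t := by
    ext ω
    simp [not_le]
  have hmeas : MeasurableSet (⋃ i ∈ s, {ω | t ≤ X i ω}) :=
    s.measurableSet_biUnion fun i _ => measurableSet_le measurable_const (hX i)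
  have h := prob_compl_eq_one_sub (μ := P) hmeas.compl
  rw [compl_compl] at h
  rw [h, hcompl, hind.meas_biInter fun i _ => ⟨_, measurableSet_Iio, rfl⟩, Finset.prod_congr rfl hp,
    Finset.prod_const]

lemma measure_iInter_eq_zero_of_le_mul {B : ℕ → Set Ω} {c : ℝ≥0∞} (hc : c < 1)
    (hB₀ : P (B 0) ≠ ⊤) (hB : ∀ n, P (B (n + 1)) ≤ c * P (B n)) : P (⋂ n, B n) = 0 := by
  have hpow : ∀ n, P (B n) ≤ c ^ n * P (B 0) := by
    intro n
    induction n with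
    | zero => simp
    | succ n ih => calc
        P (B (n + 1)) ≤ c * (c ^ n * P (B 0)) := (hB n).trans (by gcongr)
        _ = c ^ (n + 1) * P (B 0) := by rw [pow_succ', mul_assoc]
  have hlim : Tendsto (fun n => c ^ n * P (B 0)) atTop (𝓝 0) := by
    simpa using ENNReal.Tendsto.mul_const (ENNReal.tendsto_pow_atTop_nhds_zero_of_lt_one hc)
      (.inr hB₀)
  exact le_antisymm (ge_of_tendsto' hlim fun n => (measure_mono (Set.iInter_subset B n)).trans
    (hpow n)) bot_le

end ProbabilityTheory

namespace GFF

variable (d : ℕ)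

def parent : V d → V d
  | none => none
  | some (i, l) => if l = [] then none else some (i, l.dropLast)

/-- At the root, `j.castSucc` skips `ō = some (Fin.last d, [])`. -/
def forwardChild (v : V d) (j : Fin d) : V d :=
  match v with
  | none => some (j.castSucc, [])
  | some (i, l) => some (i, l ++ [j])

lemma mem_pathFromRoot_some {i : Fin (d + 1)} {l : List (Fin d)} {z : V d} :
    z ∈ pathFromRoot d (some (i, l)) ↔ z = none ∨ ∃ k ≤ l.length, z = some (i, l.take k) := by
  simp only [pathFromRoot, List.mem_cons, List.mem_map, List.mem_range, Nat.lt_succ_iff]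
  grind

lemma none_mem_pathFromRoot (v : V d) : none ∈ pathFromRoot d v := by
  rcases v with _ | ⟨i, l⟩ <;> simp [pathFromRoot]

lemma mem_pathFromRoot_self (v : V d) : v ∈ pathFromRoot d v := by
  rcases v with _ | ⟨i, l⟩
  · simp [pathFromRoot]
  · exact mem_pathFromRoot_some d |>.2 <| .inr ⟨l.length, le_rfl, by rw [List.take_length]⟩

lemma parent_mem_pathFromRoot (v : V d) : parent d v ∈ pathFromRoot d v := by
  rcases v with _ | ⟨i, l⟩
  · simp [pathFromRoot, parent]
  · by_cases hl : l = []
    · simpa [parent, hl] using none_mem_pathFromRoot d (some (i, l))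
    · refine mem_pathFromRoot_some d |>.2 <| .inr ⟨l.length - 1, by omega, ?_⟩
      simp [parent, hl, List.dropLast_eq_take]

lemma depth_le_of_mem_pathFromRoot {z v : V d} (h : z ∈ pathFromRoot d v) :
    depth d z ≤ depth d v := by
  rcases v with _ | ⟨i, l⟩
  · simp_all [pathFromRoot]
  · rcases (mem_pathFromRoot_some d).1 h with rfl | ⟨k, hk, rfl⟩
    · simp [depth]
    · simp only [depth, Option.elim_some, List.length_take]
      omega

lemma mem_pathFromRoot_trans {x y z : V d} (hxy : x ∈ pathFromRoot d y)
    (hyz : y ∈ pathFromRoot d z) : x ∈ pathFromRoot d z := by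
  rcases z with _ | ⟨i, l⟩
  · simp_all [pathFromRoot]
  · rcases (mem_pathFromRoot_some d).1 hyz with rfl | ⟨k, hk, rfl⟩
    · simp_all [pathFromRoot]
    · rcases (mem_pathFromRoot_some d).1 hxy with rfl | ⟨k', -, rfl⟩
      · exact none_mem_pathFromRoot d _
      · rw [List.take_take]
        exact mem_pathFromRoot_some d |>.2 <| .inr ⟨min k' k, by omega, rfl⟩

lemma mem_cluster_of_mem_pathFromRoot {h : ℝ} {φ : V d → ℝ} {x z : V d}
    (hx : x ∈ cluster d h φ) (hz : z ∈ pathFromRoot d x) : z ∈ cluster d h φ :=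
  fun _ hw => hx _ (mem_pathFromRoot_trans d hw hz)

lemma le_of_mem_cluster {h : ℝ} {φ : V d → ℝ} {x : V d} (hx : x ∈ cluster d h φ) : h ≤ φ x :=
  hx x (mem_pathFromRoot_self d x)

lemma depth_parent {v : V d} {n : ℕ} (hv : depth d v = n + 1) : depth d (parent d v) = n := by
  rcases v with _ | ⟨i, l⟩
  · simp [depth] at hv
  · by_cases hl : l = []
    · simp_all [parent, depth]
    · simp only [depth, Option.elim_some] at hv
      have := List.length_pos_of_ne_nil hl
      simp [parent, hl, depth]
      omega

lemma parent_mem_forward {v : V d} (hv : v ∈ forward d) : parent d v ∈ forward d := by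
  rcases v with _ | ⟨i, l⟩
  · simp [parent, forward]
  · by_cases hl : l = [] <;> simp_all [parent, forward]

lemma eq_forwardChild_parent {v : V d} (hv : v ∈ forward d) (hv₀ : v ≠ none) :
    ∃ j, v = forwardChild d (parent d v) j := by
  rcases v with _ | ⟨i, l⟩
  · exact absurd rfl hv₀
  · by_cases hl : l = []
    · subst hl
      have hi : i ≠ Fin.last d := hv
      exact ⟨i.castPred hi, by simp [parent, forwardChild]⟩
    · exact ⟨l.getLast hl, by simp [parent, hl, forwardChild, List.dropLast_append_getLast hl]⟩

lemma field_eq_parent {v : V d} (hv : v ≠ none) (a : ℝ) (ω : V d → ℝ) :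
    field d a ω v = field d a ω (parent d v) / d + ω v := by
  rcases v with _ | ⟨i, l⟩
  · exact absurd rfl hv
  by_cases hl : l = []
  · subst hl
    simp [field, parent]
  have hlen : l.length ≠ 0 := by simpa using hl
  have hterm : ∀ k ∈ Finset.range l.length,
      ω (some (i, l.dropLast.take k)) / (d : ℝ) ^ (l.length - 1 - k) / d =
        ω (some (i, l.take k)) / (d : ℝ) ^ (l.length - k) := by
    intro k hk
    rw [Finset.mem_range] at hk
    rw [List.dropLast_eq_take, List.take_take, min_eq_left (by omega), div_div, ← pow_succ]
    congr 3
    omega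
  simp only [parent, hl, if_false, field, List.length_dropLast, Nat.sub_add_cancel
    (Nat.pos_of_ne_zero hlen)]
  rw [Finset.sum_range_succ, List.take_length, Nat.sub_self, pow_zero, div_one, add_div,
    Finset.sum_div, Finset.sum_congr rfl hterm, div_div, ← pow_succ, add_assoc]

lemma finite_setOf_depth_le (n : ℕ) : {v : V d | depth d v ≤ n}.Finite := by
  have hlists : {l : List (Fin d) | l.length ≤ n}.Finite := List.finite_length_le _ n
  refine (((Set.finite_univ.prod hlists).image some).insert none).subset ?_
  rintro (_ | ⟨i, l⟩) hv
  · exact Set.mem_insert _ _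
  · simp only [Set.mem_ofPred_eq, depth, Option.elim_some] at hv
    exact Set.mem_insert_of_mem _ ⟨(i, l), ⟨trivial, by simp only [Set.mem_ofPred_eq]; omega⟩, rfl⟩

def forwardLevel (n : ℕ) : Finset (V d) :=
  Set.Finite.toFinset (s := {v | v ∈ forward d ∧ depth d v = n})
    ((finite_setOf_depth_le d n).subset fun _ hv => hv.2.le)

lemma mem_forwardLevel {n : ℕ} {v : V d} :
    v ∈ forwardLevel d n ↔ v ∈ forward d ∧ depth d v = n :=
  Set.Finite.mem_toFinset _

def forwardChildren (n : ℕ) (T : Finset (V d)) : Finset (V d) :=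
  (forwardLevel d (n + 1)).filter (parent d · ∈ T)

lemma card_forwardChildren_le (n : ℕ) (T : Finset (V d)) :
    (forwardChildren d n T).card ≤ d * T.card := by
  have hsub : forwardChildren d n T ⊆ T.biUnion fun v => Finset.univ.image (forwardChild d v) := by
    intro x hx
    obtain ⟨hx, hxT⟩ := Finset.mem_filter.1 hx
    obtain ⟨hfwd, hdepth⟩ := (mem_forwardLevel d).1 hx
    obtain ⟨j, hj⟩ := eq_forwardChild_parent d hfwd (by rintro rfl; simp [depth] at hdepth)
    exact Finset.mem_biUnion.2 ⟨_, hxT, Finset.mem_image.2 ⟨j, Finset.mem_univ _, hj.symm⟩⟩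
  calc (forwardChildren d n T).card
      ≤ (T.biUnion fun v => Finset.univ.image (forwardChild d v)).card := Finset.card_le_card hsub
    _ ≤ T.card * d := Finset.card_biUnion_le_card_mul _ _ _ fun v _ =>
        Finset.card_image_le.trans (by simp)
    _ = d * T.card := mul_comm _ _

section Generations

variable {Ω : Type} {hstar a : ℝ} {Y : V d → Ω → ℝ} {ω : Ω} {n : ℕ}

def genFinset (hstar a : ℝ) (Y : V d → Ω → ℝ) (n : ℕ) (ω : Ω) : Finset (V d) :=
  (forwardLevel d n).filter (· ∈ fwdCluster d hstar a Y ω)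

lemma mem_genFinset {v : V d} : v ∈ genFinset d hstar a Y n ω ↔ v ∈ gen d hstar a Y ω n := by
  simp only [genFinset, Finset.mem_filter, mem_forwardLevel, gen, fwdCluster, Set.mem_ofPred_eq,
    Set.mem_inter_iff]
  tauto

lemma coe_genFinset : (genFinset d hstar a Y n ω : Set (V d)) = gen d hstar a Y ω n :=
  Set.ext fun _ => mem_genFinset d

lemma genFinset_subset_forwardLevel : genFinset d hstar a Y n ω ⊆ forwardLevel d n :=
  Finset.filter_subset _ _

lemma parent_mem_genFinset {v : V d} (hv : v ∈ genFinset d hstar a Y (n + 1) ω) :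
    parent d v ∈ genFinset d hstar a Y n ω := by
  obtain ⟨⟨hcl, hfwd⟩, hdepth⟩ := (mem_genFinset d).1 hv
  exact (mem_genFinset d).2 ⟨⟨mem_cluster_of_mem_pathFromRoot d hcl (parent_mem_pathFromRoot d v),
    parent_mem_forward d hfwd⟩, depth_parent d hdepth⟩

lemma genFinset_nonempty_of_infinite (hinf : (fwdCluster d hstar a Y ω).Infinite) (n : ℕ) :
    (genFinset d hstar a Y n ω).Nonempty := by
  obtain ⟨x, hx, hxn⟩ : ∃ x ∈ fwdCluster d hstar a Y ω, n ≤ depth d x := by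
    by_contra! h
    exact hinf ((finite_setOf_depth_le d n).subset fun x hx => (h x hx).le)
  have hdesc : ∀ k, (genFinset d hstar a Y (n + k) ω).Nonempty →
      (genFinset d hstar a Y n ω).Nonempty := by
    intro k
    induction k with
    | zero => exact id
    | succ k ih => exact fun ⟨v, hv⟩ => ih ⟨_, parent_mem_genFinset d hv⟩
  exact hdesc (depth d x - n) ⟨x, (mem_genFinset d).2 ⟨hx, by omega⟩⟩

end Generations

section Measurability

variable {Ω : Type} {m : MeasurableSpace Ω} {hstar a : ℝ} {Y : V d → Ω → ℝ} {n : ℕ}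

lemma measurable_field_apply (hY : ∀ v, depth d v ≤ n → Measurable[m] (Y v)) {z : V d}
    (hz : depth d z ≤ n) (a : ℝ) : Measurable[m] fun ω => field d a (fun v => Y v ω) z := by
  rcases z with _ | ⟨i, l⟩
  · exact measurable_const
  refine measurable_const.add (Finset.measurable_sum _ fun k hk => (hY _ ?_).div_const _)
  refine le_trans ?_ hz
  simp only [depth, Option.elim_some, List.length_take]
  have := Finset.mem_range.1 hk
  omega

lemma measurable_mem_fwdCluster (hY : ∀ v, depth d v ≤ n → Measurable[m] (Y v)) {v : V d}
    (hv : depth d v ≤ n) : Measurable[m] fun ω => v ∈ fwdCluster d hstar a Y ω := by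
  refine Measurable.and (Measurable.forall fun z => ?_) measurable_const
  by_cases hz : z ∈ pathFromRoot d v
  · exact measurable_const.imp (measurableSet_setOfPred.1 (measurableSet_le measurable_const
      (measurable_field_apply d hY ((depth_le_of_mem_pathFromRoot d hz).trans hv) a)))
  · simp [hz]

lemma measurable_genFinset (hY : ∀ v, depth d v ≤ n → Measurable[m] (Y v)) {k : ℕ}
    (hk : k ≤ n) : Measurable[m] (genFinset d hstar a Y k) := by
  refine measurable_finset_iff.2 fun v => ?_
  by_cases hv : v ∈ forwardLevel d k
  · simpa [genFinset, hv] using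
      measurable_mem_fwdCluster d hY (((mem_forwardLevel d).1 hv).2.trans_le hk)
  · simp [genFinset, hv]

end Measurability

def boundedSurvival {Ω : Type} (hstar a H : ℝ) (N : ℕ) (Y : V d → Ω → ℝ) (n : ℕ) : Set Ω :=
  {ω | ∀ k ≤ n, (genFinset d hstar a Y k ω).Nonempty ∧ (genFinset d hstar a Y k ω).card ≤ N ∧
    ∀ x ∈ genFinset d hstar a Y k ω, field d a (fun v => Y v ω) x ≤ H}

section BoundedSurvival

variable {Ω : Type} {hstar a H : ℝ} {N : ℕ} {Y : V d → Ω → ℝ} {n : ℕ}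

lemma measurableSet_boundedSurvival {m : MeasurableSpace Ω}
    (hY : ∀ v, depth d v ≤ n → Measurable[m] (Y v)) :
    MeasurableSet[m] (boundedSurvival d hstar a H N Y n) := by
  refine measurableSet_setOfPred.2 (Measurable.forall fun k => ?_)
  by_cases hk : k ≤ n
  swap
  · simp [hk]
  have hZ := measurable_genFinset d (hstar := hstar) (a := a) hY hk
  refine measurable_const.imp (((Measurable.of_discrete (f := Finset.Nonempty)).comp hZ).and
    (((Measurable.of_discrete (f := fun T : Finset (V d) => T.card ≤ N)).comp hZ).and
      (Measurable.forall fun x => ?_)))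
  by_cases hx : depth d x = k
  · exact ((measurable_finset_mem x).comp hZ).imp (measurableSet_setOfPred.1
      (measurableSet_le (measurable_field_apply d hY (hx.trans_le hk) a) measurable_const))
  · have hx' : ∀ ω, x ∉ genFinset d hstar a Y k ω := fun ω h => hx ((mem_genFinset d).1 h).2
    simp [hx']

lemma subset_boundedSurvival (n : ℕ) :
    {ω | (fwdCluster d hstar a Y ω).Infinite} ∩
        {ω | ∀ n : ℕ, ∀ x ∈ gen d hstar a Y ω n, field d a (fun v => Y v ω) x ≤ H} ∩
        {ω | ∀ n : ℕ, (gen d hstar a Y ω n).encard ≤ (N : ℕ∞)} ⊆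
      boundedSurvival d hstar a H N Y n := by
  rintro ω ⟨⟨hinf, hval⟩, hcard⟩ k -
  refine ⟨genFinset_nonempty_of_infinite d hinf k, ?_, fun x hx => hval k x ((mem_genFinset d).1 hx)⟩
  have := hcard k
  rwa [← coe_genFinset d, Set.encard_coe_eq_coe_finsetCard, Nat.cast_le] at this

lemma boundedSurvival_succ_subset (n : ℕ) :
    boundedSurvival d hstar a H N Y (n + 1) ⊆
      ⋃ T ∈ (forwardLevel d n).powerset.filter (·.card ≤ N),
        (boundedSurvival d hstar a H N Y n ∩ {ω | genFinset d hstar a Y n ω = T}) ∩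
          ⋃ x ∈ forwardChildren d n T, {ω | hstar - H / d ≤ Y x ω} := by
  intro ω hω
  obtain ⟨-, hcard, hval⟩ := hω n n.le_succ
  obtain ⟨x, hx⟩ := (hω (n + 1) le_rfl).1
  have hpar := parent_mem_genFinset d hx
  obtain ⟨⟨hcl, hfwd⟩, hdepth⟩ := (mem_genFinset d).1 hx
  have hx₀ : x ≠ none := by rintro rfl; simp [depth] at hdepth
  have hrec := field_eq_parent d hx₀ a fun v => Y v ω
  have hparH := div_le_div_of_nonneg_right (hval _ hpar) (Nat.cast_nonneg (α := ℝ) d)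
  have hxh := le_of_mem_cluster d hcl
  simp only [Set.mem_iUnion, Set.mem_inter_iff, Set.mem_ofPred_eq, exists_prop]
  refine ⟨_, Finset.mem_filter.2 ⟨Finset.mem_powerset.2 (genFinset_subset_forwardLevel d), hcard⟩,
    ⟨fun k hk => hω k (hk.trans n.le_succ), rfl⟩,
    x, Finset.mem_filter.2 ⟨(mem_forwardLevel d).2 ⟨hfwd, hdepth⟩, hpar⟩, by linarith⟩

end BoundedSurvival

section Step

variable {Ω : Type} [MeasurableSpace Ω] {P : Measure Ω} {Y : V d → Ω → ℝ} {hstar a H : ℝ}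
  {N n : ℕ}

lemma measure_biUnion_forwardChildren_le (hEnv : IsGFFEnv d P Y) {T : Finset (V d)} (hT : T.card ≤ N)
    (t : ℝ) :
    P (⋃ x ∈ forwardChildren d n T, {ω | t ≤ Y x ω}) ≤
      1 - gaussianReal 0 (varY d) (Set.Iio t) ^ (d * N) := by
  have := hEnv.prob
  have hlaw : ∀ x ∈ forwardChildren d n T,
      P (Y x ⁻¹' Set.Iio t) = gaussianReal 0 (varY d) (Set.Iio t) := by
    intro x hx
    have hx₀ : x ≠ none := by
      rintro rfl
      simp [forwardChildren, mem_forwardLevel, depth] at hx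
    rw [← Measure.map_apply (hEnv.meas x) measurableSet_Iio, hEnv.law x, if_neg hx₀]
  rw [measure_biUnion_le_eq_one_sub_pow hEnv.indep hEnv.meas _ hlaw]
  exact tsub_le_tsub_left (pow_le_pow_of_le_one zero_le prob_le_one
    ((card_forwardChildren_le d n T).trans (Nat.mul_le_mul_left d hT))) 1

lemma measure_boundedSurvival_succ_le (hEnv : IsGFFEnv d P Y) (n : ℕ) :
    P (boundedSurvival d hstar a H N Y (n + 1)) ≤
      (1 - gaussianReal 0 (varY d) (Set.Iio (hstar - H / d)) ^ (d * N)) *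
        P (boundedSurvival d hstar a H N Y n) := by
  have hind := indep_iSup_of_disjoint (μ := P) (fun v => (hEnv.meas v).comap_le) hEnv.indep
    (S := {v | depth d v ≤ n}) (T := {v | depth d v = n + 1})
    (Set.disjoint_left.2 fun v (h : _ ≤ n) (h' : _ = n + 1) => by omega)
  have hpast : ∀ v, depth d v ≤ n →
      Measurable[⨆ v ∈ {v | depth d v ≤ n}, MeasurableSpace.comap (Y v) inferInstance] (Y v) :=
    fun _ hv => measurable_of_mem_iSup_comap Y hv
  refine measure_le_mul_of_subset_biUnion_indep
    (iSup₂_le fun v _ => (hEnv.meas v).comap_le) hind ?_ ?_ ?_ ?_ ?_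
    (boundedSurvival_succ_subset d n)
  · exact fun T _ => (measurableSet_boundedSurvival d hpast).inter
      (measurable_genFinset d hpast le_rfl (measurableSet_singleton T))
  · exact fun T _ T' _ hne => Set.disjoint_left.2 fun ω h h' => hne (h.2.symm.trans h'.2)
  · exact fun _ _ => Set.inter_subset_left
  · exact fun T _ => (forwardChildren d n T).measurableSet_biUnion fun x hx =>
      measurableSet_le measurable_const (measurable_of_mem_iSup_comap Y
        (S := {v | depth d v = n + 1}) ((mem_forwardLevel d).1 (Finset.mem_filter.1 hx).1).2)
  · exact fun T hT => measure_biUnion_forwardChildren_le d hEnv (Finset.mem_filter.1 hT).2 _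

end Step

theorem no_percolation_on_bounded_event_general {Ω : Type} [MeasurableSpace Ω] (d : ℕ) (hd : 2 ≤ d)
    (P : Measure Ω) (Y : V d → Ω → ℝ) (hEnv : IsGFFEnv d P Y)
    (hstar : ℝ) (a : ℝ) (H : ℝ) (N : ℕ) :
    P ({ω | (fwdCluster d hstar a Y ω).Infinite} ∩
        {ω | ∀ n : ℕ, ∀ x ∈ gen d hstar a Y ω n, field d a (fun v => Y v ω) x ≤ H} ∩
        {ω | ∀ n : ℕ, (gen d hstar a Y ω n).encard ≤ (N : ℕ∞)}) = 0 := by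
  have := hEnv.prob
  have hvarY : varY d ≠ 0 := div_ne_zero (by positivity) (by exact_mod_cast (by omega : d ≠ 0))
  have hp : gaussianReal 0 (varY d) (Set.Iio (hstar - H / d)) ≠ 0 := fun h => by
    simpa using gaussianReal_absolutelyContinuous' 0 hvarY h
  have hc : 1 - gaussianReal 0 (varY d) (Set.Iio (hstar - H / d)) ^ (d * N) < 1 :=
    ENNReal.sub_lt_self ENNReal.one_ne_top one_ne_zero (pow_ne_zero _ hp)
  exact measure_mono_null (Set.subset_iInter (subset_boundedSurvival d))
    (measure_iInter_eq_zero_of_le_mul hc (measure_ne_top _ _)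
      (measure_boundedSurvival_succ_le d hEnv))

/-- Lemma `dead_bounded`: for every `a ≥ h*`, `H ≥ h*`, `N ≥ 1`,
`P_a[𝒜 ∩ 𝒞_H ∩ 𝒟_N] = 0`, where `𝒜 = {|C_o^{h*} ∩ 𝕋⁺| = ∞}`,
`𝒞_H = {Φ_n ≤ H ∀ n}` and `𝒟_N = {|Z_n| ≤ N ∀ n}`. -/
theorem no_percolation_on_bounded_event {Ω : Type} [MeasurableSpace Ω] (d : ℕ) (hd : 2 ≤ d)
    (P : Measure Ω) (Y : V d → Ω → ℝ) (hEnv : IsGFFEnv d P Y)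
    (hstar : ℝ) (χ : ℝ → ℝ) (hcrit : IsCriticalPair d hstar χ)
    (a : ℝ) (ha : hstar ≤ a) (H : ℝ) (hH : hstar ≤ H) (N : ℕ) (hN : 1 ≤ N) :
    P ({ω | (fwdCluster d hstar a Y ω).Infinite} ∩
        {ω | ∀ n : ℕ, ∀ x ∈ gen d hstar a Y ω n, field d a (fun v => Y v ω) x ≤ H} ∩
        {ω | ∀ n : ℕ, (gen d hstar a Y ω n).encard ≤ (N : ℕ∞)}) = 0 :=
  no_percolation_on_bounded_event_general d hd P Y hEnv hstar a H N

end GFF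
end
end

section
/- For all h, s ∈ ℝ there is a constant C_{h,s} < ∞ such that for every f ∈ L²(ν*), ‖θ_s H_h[f]‖_{L^{2d}(ν*)} ≤ C_{h,s} ‖f‖_{L²(ν*)}; in particular θ_s H_h[f] ∈ L^{2d}(ν*). Here θ_s denotes the shift (θ_s g)(x) = g(x + s). -/
open MeasureTheory ProbabilityTheory Real Set Filter Topology NNReal
open scoped Classical ENNReal

noncomputable section

/-!
By Cauchy–Schwarz in `L²(ν*)`, `|H_h f(b)| ≤ ‖f‖_{L²(ν*)} · ‖k_b / ρ_{ν*}‖_{L²(ν*)}` with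
`k_b = ρ_Y(· − m_b)`, `m_b = b/d − ((d−1)/d) h`. Its square is a Gaussian integral: writing
`σ = 2σ_ν² − σ_Y² > 0`, it equals `σ_ν² / √(σ_Y² σ) · exp((m_b + h*)² / σ)`. After the shift by
`s`, the bound is `√K · exp((x − t)² / (2d²σ))` for some `K` and `t`, and its `2d`-th power is
integrable against `ν* = 𝒩(−h*, σ_ν²)` because `2σ_ν² < dσ`, which for `σ_ν² = d/(d−1)` and
`σ_Y² = (d+1)/d` reads `(d − 1)² > 0`.
-/

lemma exp_neg_mul_sq_add_mul_add_eq {a : ℝ} (ha : a ≠ 0) (b c x : ℝ) :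
    exp (-a * x ^ 2 + b * x + c) =
      exp (b ^ 2 / (4 * a) + c) * exp (-a * (x - b / (2 * a)) ^ 2) := by
  rw [← Real.exp_add]
  congr 1
  field_simp
  ring

lemma integrable_exp_neg_mul_sq_add_mul_add {a : ℝ} (ha : 0 < a) (b c : ℝ) :
    Integrable fun x => exp (-a * x ^ 2 + b * x + c) := by
  simp_rw [exp_neg_mul_sq_add_mul_add_eq ha.ne']
  exact ((integrable_exp_neg_mul_sq ha).comp_sub_right _).const_mul _

lemma integral_exp_neg_mul_sq_add_mul_add {a : ℝ} (ha : 0 < a) (b c : ℝ) :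
    ∫ x, exp (-a * x ^ 2 + b * x + c) = √(π / a) * exp (b ^ 2 / (4 * a) + c) := by
  simp_rw [exp_neg_mul_sq_add_mul_add_eq ha.ne']
  rw [integral_const_mul, integral_sub_right_eq_self (fun x => exp (-a * x ^ 2)),
    integral_gaussian, mul_comm]

lemma gaussianPDFReal_sq_div_gaussianPDFReal {v w : ℝ≥0} (hv : v ≠ 0) (hw : w ≠ 0) (m μ x : ℝ) :
    gaussianPDFReal m v x ^ 2 / gaussianPDFReal μ w x =
      √(2 * π * w) / (2 * π * v) *
        exp (-((2 * w - v) / (2 * v * w)) * x ^ 2 + (2 * m / v - μ / w) * x +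
          (μ ^ 2 / (2 * w) - m ^ 2 / v)) := by
  have hexp : exp (-(x - m) ^ 2 / (2 * v)) ^ 2 / exp (-(x - μ) ^ 2 / (2 * w)) =
      exp (-((2 * w - v) / (2 * v * w)) * x ^ 2 + (2 * m / v - μ / w) * x +
          (μ ^ 2 / (2 * w) - m ^ 2 / v)) := by
    rw [← Real.exp_nat_mul, ← Real.exp_sub]
    congr 1
    field_simp
    ring
  rw [gaussianPDFReal, gaussianPDFReal, mul_pow, inv_pow,
    Real.sq_sqrt (by positivity : (0 : ℝ) ≤ 2 * π * v), ← hexp]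
  field_simp

lemma integrable_gaussianPDFReal_sq_div_gaussianPDFReal {v w : ℝ≥0} (hv : v ≠ 0)
    (hvw : (v : ℝ) < 2 * w) (m μ : ℝ) :
    Integrable fun x => gaussianPDFReal m v x ^ 2 / gaussianPDFReal μ w x := by
  have hw : (0 : ℝ) < w := by linarith [(NNReal.coe_nonneg v)]
  have ha : (0 : ℝ) < (2 * w - v) / (2 * v * w) := div_pos (by linarith) (by positivity)
  simp_rw [gaussianPDFReal_sq_div_gaussianPDFReal hv (by exact_mod_cast hw.ne') m μ]
  exact (integrable_exp_neg_mul_sq_add_mul_add ha _ _).const_mul _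

lemma integral_gaussianPDFReal_sq_div_gaussianPDFReal {v w : ℝ≥0} (hv : v ≠ 0)
    (hvw : (v : ℝ) < 2 * w) (m μ : ℝ) :
    ∫ x, gaussianPDFReal m v x ^ 2 / gaussianPDFReal μ w x =
      w / √(v * (2 * w - v)) * exp ((m - μ) ^ 2 / (2 * w - v)) := by
  have hw : (0 : ℝ) < w := by linarith [(NNReal.coe_nonneg v)]
  have hσ : (0 : ℝ) < 2 * w - v := by linarith
  have ha : (0 : ℝ) < (2 * w - v) / (2 * v * w) := div_pos hσ (by positivity)
  simp_rw [gaussianPDFReal_sq_div_gaussianPDFReal hv (by exact_mod_cast hw.ne') m μ]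
  rw [integral_const_mul, integral_exp_neg_mul_sq_add_mul_add ha, ← mul_assoc]
  congr 1
  · rw [← sq_eq_sq₀ (by positivity) (by positivity), mul_pow, div_pow, div_pow,
      Real.sq_sqrt (by positivity), Real.sq_sqrt (by positivity), Real.sq_sqrt (by positivity)]
    field_simp
  · congr 1
    field_simp
    ring

lemma enorm_integral_mul_le_eLpNorm_withDensity {α : Type*} [MeasurableSpace α] {μ : Measure α}
    {f κ ρ : α → ℝ} (hf : AEMeasurable f μ) (hκ : AEMeasurable κ μ) (hρ : Measurable ρ)
    (hρ_pos : ∀ x, 0 < ρ x) :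
    ‖∫ x, f x * κ x ∂μ‖ₑ ≤ eLpNorm f 2 (μ.withDensity fun x => ENNReal.ofReal (ρ x)) *
      (∫⁻ x, ENNReal.ofReal (κ x ^ 2 / ρ x) ∂μ) ^ (1 / 2 : ℝ) := by
  set F : α → ℝ≥0∞ := fun x => ‖f x‖ₑ * ENNReal.ofReal √(ρ x)
  set K : α → ℝ≥0∞ := fun x => ENNReal.ofReal (|κ x| / √(ρ x))
  have hFK : ∀ x, ‖f x * κ x‖ₑ = F x * K x := by
    intro x
    have hsqrt : 0 < √(ρ x) := Real.sqrt_pos.mpr (hρ_pos x)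
    rw [enorm_mul, Real.enorm_eq_ofReal_abs (κ x), mul_assoc, ← ENNReal.ofReal_mul hsqrt.le,
      mul_div_cancel₀ _ hsqrt.ne']
  have hF2 : ∫⁻ x, F x ^ (2 : ℝ) ∂μ =
      ∫⁻ x, ‖f x‖ₑ ^ (2 : ℝ) ∂(μ.withDensity fun x => ENNReal.ofReal (ρ x)) := by
    rw [lintegral_withDensity_eq_lintegral_mul₀ hρ.ennreal_ofReal.aemeasurable
      (hf.enorm.pow_const _)]
    refine lintegral_congr fun x => ?_
    simp only [F, Pi.mul_apply, ENNReal.mul_rpow_of_nonneg _ _ zero_le_two]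
    rw [ENNReal.ofReal_rpow_of_nonneg (Real.sqrt_nonneg _) zero_le_two, Real.rpow_two,
      Real.sq_sqrt (hρ_pos x).le, mul_comm]
  have hK2 : ∀ x, K x ^ (2 : ℝ) = ENNReal.ofReal (κ x ^ 2 / ρ x) := by
    intro x
    rw [ENNReal.ofReal_rpow_of_nonneg (by positivity) zero_le_two, Real.rpow_two, div_pow, sq_abs,
      Real.sq_sqrt (hρ_pos x).le]
  calc ‖∫ x, f x * κ x ∂μ‖ₑ ≤ ∫⁻ x, F x * K x ∂μ :=
        (enorm_integral_le_lintegral_enorm _).trans_eq (lintegral_congr hFK)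
    _ ≤ (∫⁻ x, F x ^ (2 : ℝ) ∂μ) ^ (1 / 2 : ℝ) * (∫⁻ x, K x ^ (2 : ℝ) ∂μ) ^ (1 / 2 : ℝ) :=
        ENNReal.lintegral_mul_le_Lp_mul_Lq μ .two_two
          (hf.enorm.mul (hρ.sqrt.ennreal_ofReal.aemeasurable))
          (hκ.abs.div hρ.sqrt.aemeasurable).ennreal_ofReal
    _ = _ := by
        rw [hF2, lintegral_congr hK2, eLpNorm_eq_lintegral_rpow_enorm_toReal two_ne_zero
          ENNReal.ofNat_ne_top, ENNReal.toReal_ofNat]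

lemma memLp_exp_mul_sq_sub_gaussianReal {p : ℝ≥0∞} (hp : p ≠ ∞) {w : ℝ≥0} (hw : w ≠ 0)
    {c : ℝ} (hc : p.toReal * c < 1 / (2 * w)) (t μ : ℝ) :
    MemLp (fun x => exp (c * (x - t) ^ 2)) p (gaussianReal μ w) := by
  have hmeas : AEStronglyMeasurable (fun x => exp (c * (x - t) ^ 2)) (gaussianReal μ w) := by
    fun_prop
  rcases eq_or_ne p 0 with rfl | hp0
  · exact memLp_zero_iff_aestronglyMeasurable.mpr hmeas
  rw [← integrable_norm_rpow_iff hmeas hp0 hp, gaussianReal_of_var_ne_zero _ hw,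
    integrable_withDensity_iff (measurable_gaussianPDF _ _)
      (ae_of_all _ fun _ => by simp [gaussianPDF])]
  have ha : 0 < 1 / (2 * w) - p.toReal * c := sub_pos.mpr hc
  refine ((integrable_exp_neg_mul_sq_add_mul_add ha (μ / w - 2 * p.toReal * c * t)
    (p.toReal * c * t ^ 2 - μ ^ 2 / (2 * w))).const_mul (√(2 * π * w))⁻¹).congr
    (ae_of_all _ fun x => ?_)
  simp only [toReal_gaussianPDF, gaussianPDFReal, Real.norm_of_nonneg (exp_pos _).le,
    ← Real.exp_mul]
  rw [mul_left_comm (exp _), ← Real.exp_add]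
  congr 2
  field_simp
  ring

namespace GFF

lemma coe_varRoot (d : ℕ) : (varRoot d : ℝ) = d / (d - 1) := by
  rcases Nat.eq_zero_or_pos d with rfl | hd
  · simp [varRoot]
  · rw [varRoot, NNReal.coe_div, NNReal.coe_sub (by exact_mod_cast hd)]
    simp

lemma coe_varY (d : ℕ) : (varY d : ℝ) = (d + 1) / d := by
  simp [varY]

variable {d : ℕ}

lemma varY_ne_zero (hd : d ≠ 0) : varY d ≠ 0 := by
  rw [← NNReal.coe_ne_zero, coe_varY]
  positivity

lemma two_mul_varRoot_lt (hd : 2 ≤ d) :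
    2 * (varRoot d : ℝ) < d * (2 * varRoot d - varY d) := by
  have hd' : (2 : ℝ) ≤ d := by exact_mod_cast hd
  have hd1 : (0 : ℝ) < d - 1 := by linarith
  rw [coe_varRoot, coe_varY, ← sub_pos]
  field_simp
  nlinarith

lemma varY_lt_two_mul_varRoot (hd : 2 ≤ d) : (varY d : ℝ) < 2 * varRoot d := by
  have h := two_mul_varRoot_lt hd
  have hd' : (2 : ℝ) ≤ d := by exact_mod_cast hd
  have : (0 : ℝ) ≤ varRoot d := NNReal.coe_nonneg _
  nlinarith

lemma varRoot_ne_zero (hd : 2 ≤ d) : varRoot d ≠ 0 := by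
  have := varY_lt_two_mul_varRoot hd
  intro h0
  rw [h0, NNReal.coe_zero, mul_zero] at this
  exact (NNReal.coe_nonneg _).not_gt this

lemma νstar_eq_withDensity (hd : 2 ≤ d) (hstar : ℝ) :
    νstar d hstar =
      volume.withDensity fun x => ENNReal.ofReal (gaussianPDFReal (-hstar) (varRoot d) x) :=
  gaussianReal_of_var_ne_zero _ (varRoot_ne_zero hd)

lemma Hop_of_nonneg (h : ℝ) (f : ℝ → ℝ) {b : ℝ} (hb : 0 ≤ b) :
    Hop d h f b = ∫ x in Ici 0, f x * gaussianPDFReal (b / d - (d - 1) / d * h) (varY d) x := by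
  rw [Hop, indicator_of_mem (mem_Ici.mpr hb)]
  refine integral_congr_ae (ae_of_all _ fun x => ?_)
  dsimp only
  rw [ρY, show x - b / d + (d - 1) / d * h = x - (b / d - (d - 1) / d * h) by ring,
    gaussianPDFReal_sub, zero_add]

lemma Hop_of_neg (h : ℝ) (f : ℝ → ℝ) {b : ℝ} (hb : b < 0) : Hop d h f b = 0 :=
  indicator_of_notMem (notMem_Ici.mpr hb) _

lemma Hop_congr_ae (h : ℝ) {f g : ℝ → ℝ} (hfg : f =ᵐ[volume] g) : Hop d h f = Hop d h g := by
  simp only [Hop]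
  congr 1 with a
  exact integral_congr_ae (ae_restrict_of_ae (hfg.mono fun x hx => by simp only [hx]))

lemma stronglyMeasurable_Hop (h : ℝ) {f : ℝ → ℝ} (hf : AEStronglyMeasurable f volume) :
    StronglyMeasurable (Hop d h f) := by
  rw [Hop_congr_ae h hf.ae_eq_mk]
  have hρY : Measurable (ρY d) := measurable_gaussianPDFReal _ _
  have hF : StronglyMeasurable
      fun q : ℝ × ℝ => hf.mk f q.2 * ρY d (q.2 - q.1 / d + ((d - 1) / d) * h) :=
    ((hf.stronglyMeasurable_mk.measurable.comp measurable_snd).mul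
      (hρY.comp (by fun_prop))).stronglyMeasurable
  exact (hF.integral_prod_right' (ν := volume.restrict (Ici 0))).indicator measurableSet_Ici

/-- `‖k_b / ρ_{ν*}‖_{L²(ν*)}`, where `k_b(x) = ρ_Y(x − b/d + ((d−1)/d) h)` is the kernel of `H_h`
at `b` and `ρ_{ν*}` the density of `ν*`. -/
def hopKernelNorm (d : ℕ) (hstar h b : ℝ) : ℝ :=
  √(∫ x, gaussianPDFReal (b / d - (d - 1) / d * h) (varY d) x ^ 2 /
    gaussianPDFReal (-hstar) (varRoot d) x)

lemma enorm_Hop_le (hd : 2 ≤ d) (hstar h : ℝ) {f : ℝ → ℝ} (hf : AEMeasurable f) (b : ℝ) :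
    ‖Hop d h f b‖ₑ ≤ eLpNorm f 2 (νstar d hstar) * ‖hopKernelNorm d hstar h b‖ₑ := by
  rcases lt_or_ge b 0 with hb | hb
  · simp [Hop_of_neg h f hb]
  set m : ℝ := b / d - (d - 1) / d * h
  have hint := integrable_gaussianPDFReal_sq_div_gaussianPDFReal
    (varY_ne_zero (by omega)) (varY_lt_two_mul_varRoot hd) m (-hstar)
  have hnonneg : ∀ x, 0 ≤ gaussianPDFReal m (varY d) x ^ 2 /
      gaussianPDFReal (-hstar) (varRoot d) x :=
    fun x => div_nonneg (sq_nonneg _) (gaussianPDFReal_nonneg _ _ _)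
  rw [Hop_of_nonneg h f hb, hopKernelNorm, Real.enorm_eq_ofReal (Real.sqrt_nonneg _),
    Real.sqrt_eq_rpow, ← ENNReal.ofReal_rpow_of_nonneg (integral_nonneg hnonneg) (by norm_num),
    ofReal_integral_eq_lintegral_ofReal hint (ae_of_all _ hnonneg)]
  calc _ ≤ eLpNorm f 2 ((volume.restrict (Ici 0)).withDensity
          fun x => ENNReal.ofReal (gaussianPDFReal (-hstar) (varRoot d) x)) *
        (∫⁻ x in Ici 0, ENNReal.ofReal (gaussianPDFReal m (varY d) x ^ 2 /
          gaussianPDFReal (-hstar) (varRoot d) x)) ^ (1 / 2 : ℝ) :=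
        enorm_integral_mul_le_eLpNorm_withDensity hf.restrict
          (measurable_gaussianPDFReal _ _).aemeasurable (measurable_gaussianPDFReal _ _)
          fun x => gaussianPDFReal_pos _ _ _ (varRoot_ne_zero hd)
    _ ≤ _ := by
        rw [← restrict_withDensity measurableSet_Ici, ← νstar_eq_withDensity hd]
        gcongr <;> exact Measure.restrict_le_self

lemma hopKernelNorm_add (hd : 2 ≤ d) (hstar h s x : ℝ) :
    hopKernelNorm d hstar h (x + s) =
      √(varRoot d / √(varY d * (2 * varRoot d - varY d))) *
        exp (1 / (2 * d ^ 2 * (2 * varRoot d - varY d)) *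
          (x - ((d - 1) * h - d * hstar - s)) ^ 2) := by
  have hd0 : (d : ℝ) ≠ 0 := Nat.cast_ne_zero.mpr (by omega)
  have hσ : (2 * varRoot d - varY d : ℝ) ≠ 0 := (sub_pos.mpr (varY_lt_two_mul_varRoot hd)).ne'
  rw [hopKernelNorm, integral_gaussianPDFReal_sq_div_gaussianPDFReal
    (varY_ne_zero (by omega)) (varY_lt_two_mul_varRoot hd),
    Real.sqrt_mul (by positivity), ← Real.exp_half]
  congr 2
  field_simp
  ring

lemma memLp_hopKernelNorm_comp_add_right (hd : 2 ≤ d) (hstar h s : ℝ) :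
    MemLp (fun x => hopKernelNorm d hstar h (x + s)) ((2 * d : ℕ) : ℝ≥0∞) (νstar d hstar) := by
  simp_rw [hopKernelNorm_add hd]
  refine (memLp_exp_mul_sq_sub_gaussianReal (ENNReal.natCast_ne_top _) (varRoot_ne_zero hd)
    ?_ _ _).const_mul _
  have hd0 : (0 : ℝ) < d := Nat.cast_pos.mpr (by omega)
  have hσ : (0 : ℝ) < 2 * varRoot d - varY d := sub_pos.mpr (varY_lt_two_mul_varRoot hd)
  have hw : (0 : ℝ) < varRoot d := NNReal.coe_pos.mpr (pos_iff_ne_zero.mpr (varRoot_ne_zero hd))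
  rw [ENNReal.toReal_natCast, Nat.cast_mul, Nat.cast_two,
    show 2 * (d : ℝ) * (1 / (2 * d ^ 2 * (2 * varRoot d - varY d))) =
      1 / (d * (2 * varRoot d - varY d)) by field_simp]
  exact one_div_lt_one_div_of_lt (by positivity) (two_mul_varRoot_lt hd)

theorem Hop_shift_Lp_bound_general (d : ℕ) (hd : 2 ≤ d)
    (hstar : ℝ) (h s : ℝ) :
    ∃ C : ℝ≥0, ∀ f : ℝ → ℝ, MemLp f 2 (νstar d hstar) →
      MemLp (fun x => Hop d h f (x + s)) ((2 * d : ℕ) : ℝ≥0∞) (νstar d hstar) ∧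
      eLpNorm (fun x => Hop d h f (x + s)) ((2 * d : ℕ) : ℝ≥0∞) (νstar d hstar) ≤
        C * eLpNorm f 2 (νstar d hstar) := by
  have hK := memLp_hopKernelNorm_comp_add_right hd hstar h s
  refine ⟨(eLpNorm (fun x => hopKernelNorm d hstar h (x + s)) ((2 * d : ℕ) : ℝ≥0∞)
    (νstar d hstar)).toNNReal, fun f hf => ?_⟩
  have hf_vol : AEStronglyMeasurable f volume :=
    hf.1.mono_ac (gaussianReal_absolutelyContinuous' _ (varRoot_ne_zero hd))
  have hbound := eLpNorm_le_mul_eLpNorm_of_ae_le_mul'' ((2 * d : ℕ) : ℝ≥0∞) hK.1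
    (ae_of_all _ fun x => enorm_Hop_le hd hstar h hf_vol.aemeasurable (x + s))
  have hmeas : AEStronglyMeasurable (fun x => Hop d h f (x + s)) (νstar d hstar) :=
    ((stronglyMeasurable_Hop h hf_vol).comp_measurable
      (measurable_add_const s)).aestronglyMeasurable
  refine ⟨⟨hmeas, hbound.trans_lt (ENNReal.mul_lt_top hf.2 hK.2)⟩, ?_⟩
  rw [ENNReal.coe_toNNReal hK.2.ne]
  exact hbound.trans_eq (mul_comm _ _)

/-- Lemma `image_of_H`(a): for all `h, s ∈ ℝ` there is `C_{h,s} < ∞`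
such that for every `f ∈ L²(ν*)`, `‖θ_s H_h[f]‖_{L^{2d}(ν*)} ≤ C_{h,s} ‖f‖_{L²(ν*)}`;
in particular `θ_s H_h[f] ∈ L^{2d}(ν*)`.  Here `(θ_s g)(x) = g(x+s)`. -/
theorem Hop_shift_Lp_bound (d : ℕ) (hd : 2 ≤ d)
    (hstar : ℝ) (χ : ℝ → ℝ) (hcrit : IsCriticalPair d hstar χ) (h s : ℝ) :
    ∃ C : ℝ≥0, ∀ f : ℝ → ℝ, MemLp f 2 (νstar d hstar) →
      MemLp (fun x => Hop d h f (x + s)) ((2 * d : ℕ) : ℝ≥0∞) (νstar d hstar) ∧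
      eLpNorm (fun x => Hop d h f (x + s)) ((2 * d : ℕ) : ℝ≥0∞) (νstar d hstar) ≤
        C * eLpNorm f 2 (νstar d hstar) :=
  Hop_shift_Lp_bound_general d hd hstar h s

end GFF
end
end
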